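/- arXiv:1604.06992 — 2 statements merged into one kernel-verified Lean document; each statement's English description precedes it below -/
import Mathlib

section
/- Let 0 < α < 2n and D a dyadic grid on ℝⁿ. For dyadic cubes Q₁, Q₂ and cancellative Haar functions h_{Q₁}^{ε₁}, h_{Q₂}^{ε₂}, the bilinear dyadic fractional integral satisfies I_α^D(h_{Q₁}^{ε₁}, h_{Q₂}^{ε₂}) = c_α |Q₁ ∩ Q₂|^{α/n} h_{Q₁}^{ε₁} h_{Q₂}^{ε₂}, where c_α is determined by Σ_{Q ⊊ Q₁∩Q₂} |Q|^{α/n} 1_Q = c_α |Q₁∩Q₂|^{α/n} 1_{Q₁∩Q₂} (interpreting the right side as 0 when Q₁ ∩ Q₂ = ∅). -/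
open MeasureTheory Set
open scoped ENNReal Classical

noncomputable section

/-- A dyadic cube in `ℝⁿ`, encoded by its generation `k` and corner `m`:
the cube `∏ i, [2^k m i, 2^k (m i + 1))`. -/
abbrev Cube (n : ℕ) := ℤ × (Fin n → ℤ)

/-- The set in `ℝⁿ` corresponding to a dyadic cube. -/
def cubeSet {n : ℕ} (Q : Cube n) : Set (Fin n → ℝ) :=
  {x | ∀ i, (2:ℝ)^Q.1 * Q.2 i ≤ x i ∧ x i < (2:ℝ)^Q.1 * (Q.2 i + 1)}

/-- The volume `|Q| = 2^{kn}` of a dyadic cube. -/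
def vol {n : ℕ} (Q : Cube n) : ℝ := ((2:ℝ)^Q.1)^n

/-- The non-cancellative signature `ε = (1,…,1)`. -/
def allOne (n : ℕ) : Fin n → Bool := fun _ => true

/-- One-dimensional Haar functions on the dyadic interval `I = [2^k m, 2^k(m+1))`:
`h_I^0 = |I|^{-1/2} (1_{I₋} - 1_{I₊})` (for `e = false`) and `h_I^1 = |I|^{-1/2} 1_I`
(for `e = true`). -/
def haar1 (k m : ℤ) (e : Bool) (x : ℝ) : ℝ :=
  ((2:ℝ)^k) ^ (-(1/2) : ℝ) *
    (if e then Set.indicator (Set.Ico ((2:ℝ)^k * m) ((2:ℝ)^k * (m+1))) (fun _ => (1:ℝ)) x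
     else Set.indicator (Set.Ico ((2:ℝ)^k * m) ((2:ℝ)^k * ((m : ℝ) + 1/2))) (fun _ => (1:ℝ)) x
        - Set.indicator (Set.Ico ((2:ℝ)^k * ((m : ℝ) + 1/2)) ((2:ℝ)^k * (m+1))) (fun _ => (1:ℝ)) x)

/-- The Haar function `h_Q^ε = h_{I₁}^{ε₁} ⊗ ⋯ ⊗ h_{I_n}^{ε_n}` on a dyadic cube. -/
def haar {n : ℕ} (Q : Cube n) (ε : Fin n → Bool) (x : Fin n → ℝ) : ℝ :=
  ∏ i, haar1 Q.1 (Q.2 i) (ε i) (x i)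

/-- The average `⟨f⟩_Q = |Q|⁻¹ ∫_Q f`. -/
def avg {n : ℕ} (f : (Fin n → ℝ) → ℝ) (Q : Cube n) : ℝ :=
  (∫ x in cubeSet Q, f x) / vol Q

/-- The Haar coefficient `⟨f, h_Q^ε⟩`. -/
def haarCoef {n : ℕ} (f : (Fin n → ℝ) → ℝ) (Q : Cube n) (ε : Fin n → Bool) : ℝ :=
  ∫ x, f x * haar Q ε x

/-- The dyadic fractional integral `I_α^D f = Σ_Q |Q|^{α/n} ⟨f⟩_Q 1_Q`. -/
def Ialpha {n : ℕ} (α : ℝ) (f : (Fin n → ℝ) → ℝ) (x : Fin n → ℝ) : ℝ :=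
  ∑' Q : Cube n, vol Q ^ (α / n) * avg f Q * (cubeSet Q).indicator (fun _ => (1:ℝ)) x

/-- The bilinear dyadic fractional integral
`I_α^D(f₁,f₂) = Σ_Q |Q|^{α/n} ⟨f₁⟩_Q ⟨f₂⟩_Q 1_Q`. -/
def IalphaBil {n : ℕ} (α : ℝ) (f₁ f₂ : (Fin n → ℝ) → ℝ) (x : Fin n → ℝ) : ℝ :=
  ∑' Q : Cube n, vol Q ^ (α / n) * avg f₁ Q * avg f₂ Q * (cubeSet Q).indicator (fun _ => (1:ℝ)) x

/-- The constant `c_α = Σ_{j=1}^∞ 2^{-jα}`. -/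
def calpha (α : ℝ) : ℝ := ∑' j : ℕ, (2:ℝ) ^ (-((j:ℝ)+1) * α)

/-- The `k`-th dyadic ancestor `Q^{(k)}` of a dyadic cube. -/
def ancestor {n : ℕ} (k : ℕ) (Q : Cube n) : Cube n :=
  (Q.1 + k, fun i => Int.fdiv (Q.2 i) (2^k))

/-- The center of a dyadic cube (a convenient interior point of `Q`). -/
def center {n : ℕ} (Q : Cube n) : Fin n → ℝ := fun i => (2:ℝ)^Q.1 * ((Q.2 i : ℝ) + 1/2)

/-- An axis-parallel cube (box) of sidelength `l` with corner `a`. -/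
def box {n : ℕ} (a : Fin n → ℝ) (l : ℝ) : Set (Fin n → ℝ) :=
  {x | ∀ i, a i ≤ x i ∧ x i < a i + l}

end

def dyI (k m : ℤ) : Set ℝ := Set.Ico ((2:ℝ)^k * m) ((2:ℝ)^k * ((m:ℝ)+1))

lemma dyI_subset (k m : ℤ) (j : ℕ) : dyI k m ⊆ dyI (k+j) (Int.fdiv m (2^j)) := by
  intro x hx
  obtain ⟨h1, h2⟩ := hx
  have hj : (0:ℤ) < 2^j := by positivity
  rw [Int.fdiv_eq_ediv_of_nonneg _ (by positivity)]
  have hdm := Int.mul_ediv_add_emod m (2^j)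
  have hge := Int.emod_nonneg m (ne_of_gt hj)
  have hltm := Int.emod_lt_of_pos m hj
  have hle : 2^j * (m / 2^j) ≤ m := by omega
  have hlt : m < 2^j * (m / 2^j) + 2^j := by omega
  have h2k : (0:ℝ) < (2:ℝ)^k := by positivity
  constructor
  · rw [zpow_add₀ (by norm_num : (2:ℝ) ≠ 0)]
    calc (2:ℝ)^k * 2^(j:ℤ) * ((m / 2^j : ℤ):ℝ) = (2:ℝ)^k * ((2^j * (m / 2^j) : ℤ):ℝ) := by
          push_cast [zpow_natCast]; ring
      _ ≤ (2:ℝ)^k * (m:ℝ) := by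
          apply mul_le_mul_of_nonneg_left _ (le_of_lt h2k); exact_mod_cast hle
      _ ≤ x := h1
  · rw [zpow_add₀ (by norm_num : (2:ℝ) ≠ 0)]
    calc x < (2:ℝ)^k * ((m:ℝ)+1) := h2
      _ ≤ (2:ℝ)^k * ((2^j * (m / 2^j) + 2^j : ℤ):ℝ) := by
          apply mul_le_mul_of_nonneg_left _ (le_of_lt h2k)
          have : (m:ℝ) + 1 ≤ ((2^j * (m / 2^j) + 2^j : ℤ):ℝ) := by exact_mod_cast hlt
          linarith
      _ = (2:ℝ)^k * 2^(j:ℤ) * (((m / 2^j : ℤ):ℝ) + 1) := by push_cast [zpow_natCast]; ring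

lemma dyI_disjoint {k m m' : ℤ} (h : m ≠ m') : Disjoint (dyI k m) (dyI k m') := by
  rw [Set.disjoint_left]
  rintro x ⟨h1, h2⟩ ⟨h3, h4⟩
  have h2k : (0:ℝ) < (2:ℝ)^k := by positivity
  rcases lt_or_gt_of_ne h with hlt | hlt
  · have : (m:ℝ) + 1 ≤ (m':ℝ) := by exact_mod_cast hlt
    nlinarith
  · have : (m':ℝ) + 1 ≤ (m:ℝ) := by exact_mod_cast hlt
    nlinarith

lemma dyI_subset_or_disjoint {k' k m' m : ℤ} (h : k' ≤ k) :
    dyI k' m' ⊆ dyI k m ∨ Disjoint (dyI k' m') (dyI k m) := by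
  set j := (k - k').toNat with hj
  have hk : k = k' + j := by omega
  by_cases hM : Int.fdiv m' (2^j) = m
  · left; rw [hk, ← hM]; exact dyI_subset k' m' j
  · right
    exact Set.disjoint_of_subset_left (hk ▸ dyI_subset k' m' j) (dyI_disjoint hM)

lemma mem_dyI_iff {k m : ℤ} {x : ℝ} : x ∈ dyI k m ↔ m = ⌊x / 2^k⌋ := by
  have h2k : (0:ℝ) < (2:ℝ)^k := by positivity
  rw [dyI, Set.mem_Ico]
  rw [eq_comm, Int.floor_eq_iff]
  constructor
  · rintro ⟨h1, h2⟩
    constructor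
    · rw [le_div_iff₀ h2k]; linarith
    · rw [div_lt_iff₀ h2k]; linarith
  · rintro ⟨h1, h2⟩
    rw [le_div_iff₀ h2k] at h1
    rw [div_lt_iff₀ h2k] at h2
    constructor <;> linarith

-- depends on haar1 def and dyI lemmas
section
lemma half_lo (k m : ℤ) : (2:ℝ)^(k-1) * (((2*m : ℤ)):ℝ) = (2:ℝ)^k * (m:ℝ) := by
  rw [zpow_sub₀ (by norm_num : (2:ℝ) ≠ 0)]; push_cast; ring

lemma half_mid (k m : ℤ) : (2:ℝ)^(k-1) * (((2*m+1 : ℤ)):ℝ) = (2:ℝ)^k * ((m:ℝ) + 1/2) := by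
  rw [zpow_sub₀ (by norm_num : (2:ℝ) ≠ 0)]; push_cast; ring

lemma half_mid' (k m : ℤ) : (2:ℝ)^(k-1) * (((2*m+1 : ℤ):ℝ) + 1) = (2:ℝ)^k * ((m:ℝ) + 1) := by
  rw [zpow_sub₀ (by norm_num : (2:ℝ) ≠ 0)]; push_cast; ring

lemma dyI_half_lo_eq (k m : ℤ) : dyI (k-1) (2*m) = Set.Ico ((2:ℝ)^k * (m:ℝ)) ((2:ℝ)^k*((m:ℝ)+1/2)) := by
  unfold dyI; rw [zpow_sub₀ (by norm_num : (2:ℝ)≠0)]; push_cast; congr 1 <;> ring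

lemma dyI_half_hi_eq (k m : ℤ) : dyI (k-1) (2*m+1) = Set.Ico ((2:ℝ)^k*((m:ℝ)+1/2)) ((2:ℝ)^k*((m:ℝ)+1)) := by
  unfold dyI; rw [zpow_sub₀ (by norm_num : (2:ℝ)≠0)]; push_cast; congr 1 <;> ring

lemma haar1_eq (k m : ℤ) (e : Bool) (x : ℝ) :
    haar1 k m e x = ((2:ℝ)^k) ^ (-(1/2) : ℝ) *
      (if e then (dyI k m).indicator (fun _ => (1:ℝ)) x
       else (dyI (k-1) (2*m)).indicator (fun _ => (1:ℝ)) x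
          - (dyI (k-1) (2*m+1)).indicator (fun _ => (1:ℝ)) x) := by
  unfold haar1
  rw [dyI_half_lo_eq, dyI_half_hi_eq]
  rfl

lemma dyI_half_lo_subset (k m : ℤ) : dyI (k-1) (2*m) ⊆ dyI k m := by
  have h := dyI_subset (k-1) (2*m) 1
  have h1 : Int.fdiv (2*m) 2 = m := by
    rw [Int.fdiv_eq_ediv_of_nonneg _ (by norm_num)]; omega
  simpa [h1] using h

lemma dyI_half_hi_subset (k m : ℤ) : dyI (k-1) (2*m+1) ⊆ dyI k m := by
  have h := dyI_subset (k-1) (2*m+1) 1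
  have h1 : Int.fdiv (2*m+1) 2 = m := by
    rw [Int.fdiv_eq_ediv_of_nonneg _ (by norm_num)]; omega
  simpa [h1] using h

lemma haar1_eq_zero {k m : ℤ} {e : Bool} {x : ℝ} (hx : x ∉ dyI k m) : haar1 k m e x = 0 := by
  rw [haar1_eq]
  have h1 : x ∉ dyI (k-1) (2*m) := fun h => hx (dyI_half_lo_subset k m h)
  have h2 : x ∉ dyI (k-1) (2*m+1) := fun h => hx (dyI_half_hi_subset k m h)
  cases e <;> simp [Set.indicator_of_notMem, hx, h1, h2]

lemma haar1_const {k' k m' m : ℤ} (h : k' < k) {y z : ℝ}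
    (hy : y ∈ dyI k' m') (hz : z ∈ dyI k' m') (e : Bool) :
    haar1 k m e y = haar1 k m e z := by
  have key : ∀ K M : ℤ, k' ≤ K → (dyI K M).indicator (fun _ => (1:ℝ)) y
      = (dyI K M).indicator (fun _ => (1:ℝ)) z := by
    intro K M hK
    rcases dyI_subset_or_disjoint (m' := m') (m := M) hK with hsub | hdis
    · rw [Set.indicator_of_mem (hsub hy), Set.indicator_of_mem (hsub hz)]
    · rw [Set.indicator_of_notMem (Set.disjoint_left.mp hdis hy),
        Set.indicator_of_notMem (Set.disjoint_left.mp hdis hz)]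
  rw [haar1_eq, haar1_eq, key k m h.le, key (k-1) (2*m) (by omega), key (k-1) (2*m+1) (by omega)]

lemma indicator_one_integrable {a b : ℝ} : Integrable ((Set.Ico a b).indicator (fun _ => (1:ℝ))) := by
  rw [integrable_indicator_iff measurableSet_Ico]
  exact integrableOn_const measure_Ico_lt_top.ne

lemma haar1_integrable (k m : ℤ) (e : Bool) : Integrable (haar1 k m e) := by
  have : haar1 k m e = fun x => ((2:ℝ)^k) ^ (-(1/2) : ℝ) *
      (if e then (dyI k m).indicator (fun _ => (1:ℝ)) x
       else (dyI (k-1) (2*m)).indicator (fun _ => (1:ℝ)) x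
          - (dyI (k-1) (2*m+1)).indicator (fun _ => (1:ℝ)) x) := funext (haar1_eq k m e)
  rw [this]
  cases e
  · simp only [Bool.false_eq_true, if_false]
    exact (Integrable.sub indicator_one_integrable indicator_one_integrable).const_mul _
  · simp only [if_true]
    exact indicator_one_integrable.const_mul _

lemma integral_indicator_one {a b : ℝ} (h : a ≤ b) :
    ∫ x, (Set.Ico a b).indicator (fun _ => (1:ℝ)) x = b - a := by
  rw [integral_indicator_const _ measurableSet_Ico]
  simp [Real.volume_Ico, ENNReal.toReal_ofReal (by linarith : (0:ℝ) ≤ b - a), h]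

lemma dyI_len (k m : ℤ) : (2:ℝ)^k * ((m:ℝ)+1) - (2:ℝ)^k * (m:ℝ) = (2:ℝ)^k := by ring

lemma integral_haar1_false (k m : ℤ) : ∫ x, haar1 k m false x = 0 := by
  have : haar1 k m false = fun x => ((2:ℝ)^k) ^ (-(1/2) : ℝ) *
      ((dyI (k-1) (2*m)).indicator (fun _ => (1:ℝ)) x
          - (dyI (k-1) (2*m+1)).indicator (fun _ => (1:ℝ)) x) := by
    funext x; rw [haar1_eq]; norm_num
  rw [this]
  unfold dyI
  rw [integral_const_mul, integral_sub indicator_one_integrable indicator_one_integrable]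
  have hle : ∀ M : ℤ, (2:ℝ)^(k-1) * (M:ℝ) ≤ (2:ℝ)^(k-1) * ((M:ℝ)+1) := by
    intro M
    have : (0:ℝ) < (2:ℝ)^(k-1) := by positivity
    nlinarith
  rw [integral_indicator_one (hle _), integral_indicator_one (hle _)]
  push_cast
  ring

lemma setIntegral_haar1_superset {k m : ℤ} {e : Bool} {S : Set ℝ} (hS : dyI k m ⊆ S) :
    ∫ x in S, haar1 k m e x = ∫ x, haar1 k m e x := by
  apply setIntegral_eq_integral_of_forall_compl_eq_zero
  intro x hx
  exact haar1_eq_zero (fun h => hx (hS h))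
end

section
variable {n : ℕ}

lemma dyI_measurableSet (k m : ℤ) : MeasurableSet (dyI k m) := measurableSet_Ico

lemma volume_dyI (k m : ℤ) : volume (dyI k m) = ENNReal.ofReal ((2:ℝ)^k) := by
  unfold dyI; rw [Real.volume_Ico, dyI_len]

lemma cubeSet_eq (Q : Cube n) : cubeSet Q = Set.pi Set.univ (fun i => dyI Q.1 (Q.2 i)) := by
  ext x
  simp only [cubeSet, Set.mem_pi, Set.mem_univ, forall_true_left, Set.mem_setOf_eq, dyI,
    Set.mem_Ico]

lemma cubeSet_measurable (Q : Cube n) : MeasurableSet (cubeSet Q) := by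
  rw [cubeSet_eq]
  exact MeasurableSet.univ_pi (fun i => measurableSet_Ico)

lemma haar_eq_zero {Q : Cube n} {ε : Fin n → Bool} {x : Fin n → ℝ} (hx : x ∉ cubeSet Q) :
    haar Q ε x = 0 := by
  rw [cubeSet_eq] at hx
  simp only [Set.mem_pi, Set.mem_univ, forall_true_left, not_forall] at hx
  obtain ⟨i, hi⟩ := hx
  exact Finset.prod_eq_zero (Finset.mem_univ i) (haar1_eq_zero hi)

lemma prod_indicator_pi (s : Fin n → Set ℝ) (f : Fin n → ℝ → ℝ) (x : Fin n → ℝ) :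
    (Set.pi Set.univ s).indicator (fun y => ∏ i, f i (y i)) x
      = ∏ i, (s i).indicator (f i) (x i) := by
  by_cases hx : x ∈ Set.pi Set.univ s
  · rw [Set.indicator_of_mem hx]
    exact Finset.prod_congr rfl fun i _ =>
      (Set.indicator_of_mem (hx i (Set.mem_univ i)) _).symm
  · rw [Set.indicator_of_notMem hx]
    simp only [Set.mem_pi, Set.mem_univ, forall_true_left, not_forall] at hx
    obtain ⟨i, hi⟩ := hx
    exact (Finset.prod_eq_zero (Finset.mem_univ i) (Set.indicator_of_notMem hi _)).symm

lemma integral_pi_prod (k : ℤ) (m : Fin n → ℤ) (f : Fin n → ℝ → ℝ)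
    (hf : ∀ i, Integrable (f i)) :
    ∫ x in Set.pi Set.univ (fun i => dyI k (m i)), ∏ i, f i (x i)
      = ∏ i, ∫ t in dyI k (m i), f i t := by
  rw [← integral_indicator (MeasurableSet.univ_pi (fun i => dyI_measurableSet k (m i)))]
  have : ∀ x : Fin n → ℝ, (Set.pi Set.univ (fun i => dyI k (m i))).indicator
      (fun y => ∏ i, f i (y i)) x = ∏ i, (dyI k (m i)).indicator (f i) (x i) :=
    prod_indicator_pi _ f
  rw [integral_congr_ae (Filter.Eventually.of_forall this)]
  rw [volume_pi, MeasureTheory.integral_fintype_prod_eq_prod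
    (f := fun i t => (dyI k (m i)).indicator (f i) t)]
  exact Finset.prod_congr rfl fun i _ =>
    integral_indicator (dyI_measurableSet k (m i))

lemma integral_haar_cube (Q : Cube n) (Q₁ : Cube n) (ε₁ : Fin n → Bool) :
    ∫ x in cubeSet Q, haar Q₁ ε₁ x
      = ∏ i, ∫ t in dyI Q.1 (Q.2 i), haar1 Q₁.1 (Q₁.2 i) (ε₁ i) t := by
  rw [cubeSet_eq]
  exact integral_pi_prod Q.1 Q.2 _ (fun i => haar1_integrable _ _ _)

lemma vol_pos (Q : Cube n) : 0 < vol Q := by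
  unfold vol; positivity

lemma avg_haar_eq_zero_of_le {Q Q₁ : Cube n} {ε₁ : Fin n → Bool}
    (hε : ε₁ ≠ allOne n) (h : Q₁.1 ≤ Q.1) : avg (haar Q₁ ε₁) Q = 0 := by
  unfold avg
  rw [integral_haar_cube]
  rw [div_eq_zero_iff]
  left
  by_cases hd : ∀ i, dyI Q₁.1 (Q₁.2 i) ⊆ dyI Q.1 (Q.2 i)
  · obtain ⟨i₀, hi₀⟩ : ∃ i, ε₁ i = false := by
      by_contra hc
      push_neg at hc
      exact hε (funext fun i => by simpa [allOne] using hc i)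
    apply Finset.prod_eq_zero (Finset.mem_univ i₀)
    rw [setIntegral_haar1_superset (hd i₀), hi₀]
    exact integral_haar1_false _ _
  · push_neg at hd
    obtain ⟨i₀, hi₀⟩ := hd
    apply Finset.prod_eq_zero (Finset.mem_univ i₀)
    rcases dyI_subset_or_disjoint (m' := Q₁.2 i₀) (m := Q.2 i₀) h with hsub | hdis
    · exact absurd hsub hi₀
    · apply setIntegral_eq_zero_of_forall_eq_zero
      intro t ht
      exact haar1_eq_zero (Set.disjoint_right.mp hdis ht)

lemma avg_haar_of_lt {Q Q₁ : Cube n} {ε₁ : Fin n → Bool} {x : Fin n → ℝ}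
    (h : Q.1 < Q₁.1) (hx : x ∈ cubeSet Q) : avg (haar Q₁ ε₁) Q = haar Q₁ ε₁ x := by
  unfold avg
  rw [integral_haar_cube]
  have hx' : ∀ i, x i ∈ dyI Q.1 (Q.2 i) := by
    rw [cubeSet_eq] at hx
    exact fun i => hx i (Set.mem_univ i)
  have : ∀ i, ∫ t in dyI Q.1 (Q.2 i), haar1 Q₁.1 (Q₁.2 i) (ε₁ i) t
      = (2:ℝ)^Q.1 * haar1 Q₁.1 (Q₁.2 i) (ε₁ i) (x i) := by
    intro i
    have hc : ∀ t ∈ dyI Q.1 (Q.2 i), haar1 Q₁.1 (Q₁.2 i) (ε₁ i) t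
        = haar1 Q₁.1 (Q₁.2 i) (ε₁ i) (x i) :=
      fun t ht => haar1_const h ht (hx' i) (ε₁ i)
    rw [setIntegral_congr_fun (dyI_measurableSet _ _) hc, setIntegral_const, measureReal_def, volume_dyI,
      smul_eq_mul, ENNReal.toReal_ofReal (by positivity)]
  rw [Finset.prod_congr rfl (fun i _ => this i), Finset.prod_mul_distrib,
    Finset.prod_const]
  unfold haar vol
  rw [Finset.card_univ, Fintype.card_fin]
  field_simp

lemma volume_cubeSet (Q : Cube n) : (volume (cubeSet Q)).toReal = vol Q := by
  rw [cubeSet_eq, volume_pi_pi, ENNReal.toReal_prod]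
  unfold vol
  calc ∏ i, (volume (dyI Q.1 (Q.2 i))).toReal = ∏ _i : Fin n, (2:ℝ)^Q.1 :=
        Finset.prod_congr rfl fun i _ => by
          rw [volume_dyI, ENNReal.toReal_ofReal (by positivity)]
    _ = ((2:ℝ)^Q.1)^n := by rw [Finset.prod_const, Finset.card_univ, Fintype.card_fin]
end

/-- `I_α^D(h_{Q₁}^{ε₁}, h_{Q₂}^{ε₂}) = c_α |Q₁ ∩ Q₂|^{α/n} h_{Q₁}^{ε₁} h_{Q₂}^{ε₂}`
for cancellative Haar functions (with `|∅|^{α/n} = 0`). -/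
theorem statement5 {n : ℕ} (α : ℝ) (hα : 0 < α) (hαn : α < 2*n)
    (Q₁ Q₂ : Cube n) (ε₁ ε₂ : Fin n → Bool) (hε₁ : ε₁ ≠ allOne n) (hε₂ : ε₂ ≠ allOne n)
    (x : Fin n → ℝ) :
    IalphaBil α (haar Q₁ ε₁) (haar Q₂ ε₂) x
      = calpha α * (volume (cubeSet Q₁ ∩ cubeSet Q₂)).toReal ^ (α / n) *
          haar Q₁ ε₁ x * haar Q₂ ε₂ x := by
  have hn : 0 < n := by
    rcases Nat.eq_zero_or_pos n with h | h
    · subst h; norm_num at hαn; linarith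
    · exact h
  have hnR : (0:ℝ) < n := by exact_mod_cast hn
  set G : Cube n → ℝ := fun Q => vol Q ^ (α/(n:ℝ)) * avg (haar Q₁ ε₁) Q *
      avg (haar Q₂ ε₂) Q * (cubeSet Q).indicator (fun _ => (1:ℝ)) x with hG
  have hL : IalphaBil α (haar Q₁ ε₁) (haar Q₂ ε₂) x = ∑' Q, G Q := rfl
  have key0 : ∀ Q : Cube n, x ∈ cubeSet Q → Q.1 < Q₁.1 → Q.1 < Q₂.1 →
      G Q = vol Q ^ (α/(n:ℝ)) * haar Q₁ ε₁ x * haar Q₂ ε₂ x := by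
    intro Q hxQ h1 h2
    rw [hG]
    simp only
    rw [avg_haar_of_lt h1 hxQ, avg_haar_of_lt h2 hxQ, Set.indicator_of_mem hxQ]
    ring
  have hrpow : ∀ k : ℤ, (((2:ℝ)^k)^n) ^ (α/(n:ℝ)) = (2:ℝ)^((k:ℝ)*α) := by
    intro k
    have h2k : (0:ℝ) < (2:ℝ)^k := by positivity
    rw [← Real.rpow_natCast ((2:ℝ)^k) n, ← Real.rpow_mul h2k.le]
    have hc : (n:ℝ) * (α / n) = α := by field_simp
    rw [hc, ← Real.rpow_intCast (2:ℝ) k, ← Real.rpow_mul (by norm_num : (0:ℝ) ≤ 2)]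
  by_cases hx₁ : x ∈ cubeSet Q₁
  · by_cases hx₂ : x ∈ cubeSet Q₂
    · -- main case
      set K := min Q₁.1 Q₂.1 with hK
      have hsub : ∀ A B : Cube n, x ∈ cubeSet A → x ∈ cubeSet B → A.1 ≤ B.1 →
          cubeSet A ⊆ cubeSet B := by
        intro A B hA hB hAB
        rw [cubeSet_eq] at hA hB
        rw [cubeSet_eq A, cubeSet_eq B]
        apply Set.pi_mono
        intro i _
        rcases dyI_subset_or_disjoint (m' := A.2 i) (m := B.2 i) hAB with hs | hd
        · exact hs
        · exact absurd (hA i (Set.mem_univ i))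
            (Set.disjoint_right.mp hd (hB i (Set.mem_univ i)))
      have hvol : (volume (cubeSet Q₁ ∩ cubeSet Q₂)).toReal = ((2:ℝ)^K)^n := by
        rcases le_total Q₁.1 Q₂.1 with h | h
        · rw [Set.inter_eq_left.mpr (hsub _ _ hx₁ hx₂ h), volume_cubeSet]
          unfold vol; rw [hK, min_eq_left h]
        · rw [Set.inter_eq_right.mpr (hsub _ _ hx₂ hx₁ h), volume_cubeSet]
          unfold vol; rw [hK, min_eq_right h]
      set g : ℕ → Cube n := fun j => (K - 1 - (j:ℤ), fun i => ⌊x i / 2^(K - 1 - (j:ℤ))⌋)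
        with hg
      have hginj : Function.Injective g := by
        intro a b hab
        have : K - 1 - (a:ℤ) = K - 1 - (b:ℤ) := congrArg Prod.fst hab
        omega
      have hxg : ∀ j, x ∈ cubeSet (g j) := by
        intro j
        rw [cubeSet_eq]
        intro i _
        exact mem_dyI_iff.mpr rfl
      have hsupp : ∀ Q, Q ∉ Set.range g → G Q = 0 := by
        intro Q hQ
        by_cases hxQ : x ∈ cubeSet Q
        · by_cases h1 : Q.1 < Q₁.1
          · by_cases h2 : Q.1 < Q₂.1
            · exfalso
              apply hQ
              have hQK : Q.1 < K := lt_min h1 h2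
              refine ⟨(K - 1 - Q.1).toNat, ?_⟩
              have hQ1 : K - 1 - ((K - 1 - Q.1).toNat : ℤ) = Q.1 := by omega
              have hxd : ∀ i, x i ∈ dyI Q.1 (Q.2 i) := by
                rw [cubeSet_eq] at hxQ
                exact fun i => hxQ i (Set.mem_univ i)
              rw [hg]
              refine Prod.ext ?_ ?_
              · exact hQ1
              · funext i
                simp only
                rw [hQ1]
                exact (mem_dyI_iff.mp (hxd i)).symm
            · simp only [hG]; rw [avg_haar_eq_zero_of_le hε₂ (not_lt.mp h2)]; ring
          · simp only [hG]; rw [avg_haar_eq_zero_of_le hε₁ (not_lt.mp h1)]; ring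
        · simp only [hG]; rw [Set.indicator_of_notMem hxQ]; ring
      have hr1 : (2:ℝ)^(-α : ℝ) < 1 :=
        Real.rpow_lt_one_of_one_lt_of_neg one_lt_two (by linarith)
      have hr0 : (0:ℝ) ≤ (2:ℝ)^(-α : ℝ) := (Real.rpow_pos_of_pos two_pos _).le
      have heq : ∀ j : ℕ, (2:ℝ)^(-((j:ℝ)+1)*α) = (2:ℝ)^(-α:ℝ) * ((2:ℝ)^(-α:ℝ))^j := by
        intro j
        rw [← Real.rpow_natCast ((2:ℝ)^(-α:ℝ)) j, ← Real.rpow_mul (by norm_num : (0:ℝ) ≤ 2),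
          ← Real.rpow_add (by norm_num : (0:ℝ) < 2)]
        congr 1
        ring
      have hsummable : Summable (fun j : ℕ => (2:ℝ)^(-((j:ℝ)+1)*α)) :=
        (((summable_geometric_of_lt_one hr0 hr1).mul_left ((2:ℝ)^(-α:ℝ))).congr
          (fun j => (heq j).symm))
      have hcalpha : HasSum (fun j : ℕ => (2:ℝ)^(-((j:ℝ)+1)*α)) (calpha α) :=
        hsummable.hasSum
      have hGg : ∀ j : ℕ, G (g j) =
          ((2:ℝ)^((K:ℝ)*α) * haar Q₁ ε₁ x * haar Q₂ ε₂ x) * (2:ℝ)^(-((j:ℝ)+1)*α) := by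
        intro j
        have hlt1 : (g j).1 < Q₁.1 := by
          rw [hg]
          simp only
          have := min_le_left Q₁.1 Q₂.1
          omega
        have hlt2 : (g j).1 < Q₂.1 := by
          rw [hg]
          simp only
          have := min_le_right Q₁.1 Q₂.1
          omega
        rw [key0 _ (hxg j) hlt1 hlt2]
        have hv : vol (g j) = ((2:ℝ)^(K - 1 - (j:ℤ)))^n := rfl
        rw [hv, hrpow]
        have hexp : ((K - 1 - (j:ℤ) : ℤ):ℝ) * α = (K:ℝ)*α + (-((j:ℝ)+1)*α) := by
          push_cast; ring
        rw [hexp, Real.rpow_add (by norm_num : (0:ℝ) < 2)]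
        ring
      have hhs : HasSum (G ∘ g)
          (((2:ℝ)^((K:ℝ)*α) * haar Q₁ ε₁ x * haar Q₂ ε₂ x) * calpha α) := by
        have h2 := hcalpha.mul_left ((2:ℝ)^((K:ℝ)*α) * haar Q₁ ε₁ x * haar Q₂ ε₂ x)
        exact h2.congr_fun (fun j => hGg j)
      have := ((hginj.hasSum_iff hsupp).mp hhs).tsum_eq
      rw [hL, this, hvol, hrpow]
      ring
    · -- x ∉ cubeSet Q₂
      have hz : ∀ Q : Cube n, G Q = 0 := by
        intro Q
        by_cases hxQ : x ∈ cubeSet Q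
        · by_cases h2 : Q.1 < Q₂.1
          · by_cases h1 : Q.1 < Q₁.1
            · rw [key0 Q hxQ h1 h2, haar_eq_zero hx₂]; ring
            · simp only [hG]; rw [avg_haar_eq_zero_of_le hε₁ (not_lt.mp h1)]; ring
          · simp only [hG]; rw [avg_haar_eq_zero_of_le hε₂ (not_lt.mp h2)]; ring
        · simp only [hG]; rw [Set.indicator_of_notMem hxQ]; ring
      rw [hL, tsum_congr hz, tsum_zero, haar_eq_zero hx₂]
      ring
  · have hz : ∀ Q : Cube n, G Q = 0 := by
      intro Q
      by_cases hxQ : x ∈ cubeSet Q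
      · by_cases h2 : Q.1 < Q₂.1
        · by_cases h1 : Q.1 < Q₁.1
          · rw [key0 Q hxQ h1 h2, haar_eq_zero hx₁]; ring
          · simp only [hG]; rw [avg_haar_eq_zero_of_le hε₁ (not_lt.mp h1)]; ring
        · simp only [hG]; rw [avg_haar_eq_zero_of_le hε₂ (not_lt.mp h2)]; ring
      · simp only [hG]; rw [Set.indicator_of_notMem hxQ]; ring
    rw [hL, tsum_congr hz, tsum_zero, haar_eq_zero hx₁]
    ring
end

section
/- Let 1 < p₁, p₂ < ∞, 1/q = 1/p₁ + 1/p₂ − α/n > 0, 0 < α < 2n, and D a dyadic grid on ℝⁿ. If the bilinear commutator [b, I_α^D]₁ is bounded from L^{p₁} × L^{p₂} to L^q with norm N, then ‖b‖_{BMO_D} ≤ C N, where BMO_D is dyadic BMO. -/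
open MeasureTheory Set
open scoped ENNReal Classical

/-!
Fix a dyadic cube `J` and a sibling `S` of `J`, and test the commutator on `f₁ = 1_J (σ - ⟨σ⟩_J)`,
`σ = sign (b - ⟨b⟩_J)`, and `f₂ = 1_S`. A dyadic cube through a point of `S` either lies inside `S`,
where `f₁` vanishes, or is a strict ancestor of `J`, on which `∫ f₁ = 0` and
`∫ b f₁ = ∫_J |b - ⟨b⟩_J|`. So on `S` the commutator equals `-I_α^D(b f₁, f₂)`, whose modulus is at
least `|J| |Ĵ|^{α/n - 2} ∫_J |b - ⟨b⟩_J|` (`Ĵ` the parent of `J`), while `‖f₁‖_{p₁} ≤ 2 |J|^{1/p₁}`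
and `‖f₂‖_{p₂} = |J|^{1/p₂}`. Because `1/q = 1/p₁ + 1/p₂ - α/n`, all powers of `|J|` cancel in the
assumed bound, leaving `|J|⁻¹ ∫_J |b - ⟨b⟩_J| ≤ 2 · 4ⁿ N`.
-/

lemma setIntegral_indicator_of_subset {X E : Type*} [MeasurableSpace X] [NormedAddCommGroup E]
    [NormedSpace ℝ E] {μ : Measure X} {s t : Set X} (hs : MeasurableSet s) (hst : s ⊆ t)
    (h : X → E) : ∫ y in t, s.indicator h y ∂μ = ∫ y in s, h y ∂μ := by
  rw [setIntegral_indicator hs, inter_eq_self_of_subset_right hst]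

lemma exists_bounded_mean_zero_setIntegral_mul_eq {X : Type*} [MeasurableSpace X] {μ : Measure X}
    {s : Set X} {b : X → ℝ} {c : ℝ} (hs : μ s ≠ ∞) (hb : IntegrableOn b s μ)
    (hc : ∫ x in s, b x ∂μ = c * μ.real s) :
    ∃ g : X → ℝ, Measurable g ∧ (∀ x, |g x| ≤ 2) ∧ ∫ x in s, g x ∂μ = 0 ∧
      ∫ x in s, b x * g x ∂μ = ∫ x in s, |b x - c| ∂μ := by
  have : IsFiniteMeasure (μ.restrict s) := isFiniteMeasure_restrict.2 hs
  set b' := hb.aestronglyMeasurable.mk b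
  have hb' : Measurable b' := hb.aestronglyMeasurable.stronglyMeasurable_mk.measurable
  set σ : X → ℝ := fun x => if c ≤ b' x then 1 else -1
  have hσ : Measurable σ := Measurable.ite (measurableSet_le measurable_const hb') measurable_const
    measurable_const
  have hσ1 : ∀ x, |σ x| ≤ 1 := fun x => by simp only [σ]; split_ifs <;> simp
  have hσb : ∀ᵐ x ∂μ.restrict s, σ x * (b x - c) = |b x - c| := by
    filter_upwards [hb.aestronglyMeasurable.ae_eq_mk] with x hx
    simp only [σ, hx]
    split_ifs with h
    · rw [abs_of_nonneg (by linarith)]; ring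
    · rw [abs_of_neg (by linarith)]; ring
  have hσint : IntegrableOn σ s μ :=
    Integrable.of_bound hσ.aestronglyMeasurable 1 (.of_forall fun x => hσ1 x)
  set m := ⨍ x in s, σ x ∂μ
  have hm : |m| ≤ 1 := by
    rcases eq_or_ne (μ.restrict s) 0 with h0 | h0
    · simp [m, h0]
    obtain ⟨x₁, hx₁⟩ := exists_le_average h0 hσint
    obtain ⟨x₂, hx₂⟩ := exists_average_le h0 hσint
    exact abs_le.2 ⟨(abs_le.1 (hσ1 x₁)).1.trans hx₁, hx₂.trans (abs_le.1 (hσ1 x₂)).2⟩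
  refine ⟨fun x => σ x - m, hσ.sub_const m, fun x => ?_, setAverage_sub_setAverage hs σ, ?_⟩
  · calc |σ x - m| ≤ |σ x| + |m| := abs_sub _ _
      _ ≤ 2 := by linarith [hσ1 x]
  · have hbc_int : IntegrableOn (fun x => b x - c) s μ := hb.sub (integrable_const c)
    have hbc : ∫ x in s, (b x - c) ∂μ = 0 := by
      rw [integral_sub hb (integrable_const c), hc, setIntegral_const, smul_eq_mul, mul_comm,
        sub_self]
    have hσm_int : IntegrableOn (fun x => c * (σ x - m)) s μ :=
      (hσint.sub (integrable_const m)).const_mul c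
    calc ∫ x in s, b x * (σ x - m) ∂μ
        = ∫ x in s, (σ x * (b x - c) + (c * (σ x - m) - m * (b x - c))) ∂μ := by
          congr 1; ext x; ring
      _ = ∫ x in s, |b x - c| ∂μ := by
          have hrest_int : IntegrableOn (fun x => c * (σ x - m) - m * (b x - c)) s μ :=
            hσm_int.sub (hbc_int.const_mul m)
          rw [integral_add ((integrable_congr hσb).2 hbc_int.abs) hrest_int,
            integral_sub hσm_int (hbc_int.const_mul m),
            integral_const_mul, integral_const_mul, setAverage_sub_setAverage hs σ, hbc,
            integral_congr_ae hσb]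
          simp

lemma lintegral_ofReal_rpow_abs_indicator_le {X : Type*} [MeasurableSpace X] {μ : Measure X}
    {s : Set X} (hs : MeasurableSet s) {f : X → ℝ} {M p : ℝ} (hp : 0 < p)
    (hf : ∀ x, |f x| ≤ M) :
    ∫⁻ x, ENNReal.ofReal (|s.indicator f x| ^ p) ∂μ ≤ ENNReal.ofReal (M ^ p) * μ s := by
  calc ∫⁻ x, ENNReal.ofReal (|s.indicator f x| ^ p) ∂μ
      ≤ ∫⁻ x, s.indicator (fun _ => ENNReal.ofReal (M ^ p)) x ∂μ := by
        refine lintegral_mono fun x => ?_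
        by_cases hx : x ∈ s
        · simp only [indicator_of_mem hx]
          exact ENNReal.ofReal_le_ofReal (Real.rpow_le_rpow (abs_nonneg _) (hf x) hp.le)
        · simp [indicator_of_notMem hx, Real.zero_rpow hp.ne']
    _ = ENNReal.ofReal (M ^ p) * μ s := lintegral_indicator_const hs _

lemma ofReal_rpow_mul_measure_le_lintegral {X : Type*} [MeasurableSpace X] {μ : Measure X}
    {s : Set X} (hs : MeasurableSet s) {F : X → ℝ} {a q : ℝ} (ha : 0 ≤ a) (hq : 0 ≤ q)
    (hF : ∀ x ∈ s, a ≤ |F x|) :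
    ENNReal.ofReal (a ^ q) * μ s ≤ ∫⁻ x, ENNReal.ofReal (|F x| ^ q) ∂μ :=
  calc ENNReal.ofReal (a ^ q) * μ s = ∫⁻ _ in s, ENNReal.ofReal (a ^ q) ∂μ :=
        (setLIntegral_const s _).symm
    _ ≤ ∫⁻ x in s, ENNReal.ofReal (|F x| ^ q) ∂μ := setLIntegral_mono' hs fun x hx =>
        ENNReal.ofReal_le_ofReal (Real.rpow_le_rpow ha (hF x hx) hq)
    _ ≤ ∫⁻ x, ENNReal.ofReal (|F x| ^ q) ∂μ := setLIntegral_le_lintegral _ _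

lemma le_of_rpow_scaling_bound {B N t w s p₁ p₂ q : ℝ} (hB : 0 ≤ B) (ht : 0 < t) (hw : 1 ≤ w)
    (hs : 0 ≤ s) (hp₁ : 0 < p₁) (hq : 0 < q) (hpq : 1 / q = 1 / p₁ + 1 / p₂ - s)
    (h : ((B * t * (w * t) ^ (s - 2)) ^ q * t) ^ (1 / q)
      ≤ N * (2 ^ p₁ * t) ^ (1 / p₁) * (1 ^ p₂ * t) ^ (1 / p₂)) :
    B ≤ 2 * w ^ 2 * N * t := by
  have hw0 : 0 < w := one_pos.trans_le hw
  set e := s - 1 + 1 / q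
  have hte : t ^ e = t * t ^ (s - 2) * t ^ (1 / q) := by
    rw [show e = 1 + (s - 2) + 1 / q by ring, Real.rpow_add ht, Real.rpow_add ht, Real.rpow_one]
  have hlhs : ((B * t * (w * t) ^ (s - 2)) ^ q * t) ^ (1 / q) = B * w ^ (s - 2) * t ^ e := by
    rw [Real.mul_rpow (by positivity) ht.le, ← Real.rpow_mul (by positivity),
      mul_one_div_cancel hq.ne', Real.rpow_one, Real.mul_rpow hw0.le ht.le, hte]
    ring
  have hrhs : N * (2 ^ p₁ * t) ^ (1 / p₁) * (1 ^ p₂ * t) ^ (1 / p₂) = 2 * N * t * t ^ e := by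
    rw [Real.mul_rpow (by positivity) ht.le, ← Real.rpow_mul zero_le_two,
      mul_one_div_cancel hp₁.ne', Real.rpow_one, Real.one_rpow, one_mul,
      show e = 1 / p₁ + 1 / p₂ - 1 by linarith, Real.rpow_sub ht, Real.rpow_add ht, Real.rpow_one]
    field_simp
  have hscaled : B * w ^ (s - 2) ≤ 2 * N * t := by
    rw [hlhs, hrhs] at h
    exact le_of_mul_le_mul_right h (by positivity)
  calc B ≤ B * w ^ s := le_mul_of_one_le_right hB (Real.one_le_rpow hw hs)
    _ = B * w ^ (s - 2) * w ^ 2 := by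
      rw [Real.rpow_sub hw0, Real.rpow_two]; field_simp
    _ ≤ 2 * N * t * w ^ 2 := by gcongr
    _ = 2 * w ^ 2 * N * t := by ring

namespace Cube

variable {n : ℕ}

lemma cubeSet_eq_pi (Q : Cube n) : cubeSet Q =
    Set.pi univ (fun i => Ico ((2:ℝ) ^ Q.1 * Q.2 i) ((2:ℝ) ^ Q.1 * (Q.2 i + 1))) := by
  ext x; simp [cubeSet, Set.mem_pi]

lemma measurableSet_cubeSet (Q : Cube n) : MeasurableSet (cubeSet Q) := by
  rw [cubeSet_eq_pi]; exact .univ_pi fun _ => measurableSet_Ico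

lemma vol_pos (Q : Cube n) : 0 < vol Q := by unfold vol; positivity

lemma volume_cubeSet (Q : Cube n) : volume (cubeSet Q) = ENNReal.ofReal (vol Q) := by
  simp only [cubeSet_eq_pi, volume_pi_pi, Real.volume_Ico, mul_add, mul_one, add_sub_cancel_left,
    Finset.prod_const, Finset.card_univ, Fintype.card_fin, vol]
  rw [ENNReal.ofReal_pow (by positivity)]

instance isFiniteMeasure_restrict_cubeSet (Q : Cube n) :
    IsFiniteMeasure (volume.restrict (cubeSet Q)) :=
  isFiniteMeasure_restrict.2 (volume_cubeSet Q ▸ ENNReal.ofReal_ne_top)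

lemma measureReal_cubeSet (Q : Cube n) : volume.real (cubeSet Q) = vol Q := by
  rw [measureReal_def, volume_cubeSet, ENNReal.toReal_ofReal (vol_pos Q).le]

lemma integrableOn_cubeSet {b : (Fin n → ℝ) → ℝ} (hb : LocallyIntegrable b volume) (Q : Cube n) :
    IntegrableOn b (cubeSet Q) := by
  rw [cubeSet_eq_pi]
  exact (hb.integrableOn_isCompact (isCompact_univ_pi fun i => isCompact_Icc)).mono_set
    (Set.pi_mono fun i _ => Ico_subset_Icc_self)

noncomputable def cubeAt (g : ℤ) (x : Fin n → ℝ) : Cube n := (g, fun i => ⌊x i / (2:ℝ) ^ g⌋)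

lemma mem_cubeSet_iff_eq_cubeAt {Q : Cube n} {x : Fin n → ℝ} :
    x ∈ cubeSet Q ↔ Q = cubeAt Q.1 x := by
  have h2 : (0:ℝ) < (2:ℝ) ^ Q.1 := by positivity
  simp only [cubeSet, cubeAt, Prod.ext_iff, funext_iff, true_and]
  refine forall_congr' fun i => ?_
  rw [eq_comm, Int.floor_eq_iff, le_div_iff₀ h2, div_lt_iff₀ h2]
  constructor <;> rintro ⟨h₁, h₂⟩ <;> constructor <;> linarith

lemma mem_cubeSet_cubeAt (g : ℤ) (x : Fin n → ℝ) : x ∈ cubeSet (cubeAt g x) :=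
  mem_cubeSet_iff_eq_cubeAt.2 rfl

lemma ancestor_cubeAt (j : ℕ) (g : ℤ) (x : Fin n → ℝ) :
    ancestor j (cubeAt g x) = cubeAt (g + j) x := by
  have h2 : ((2:ℤ) ^ j : ℤ) = ((2 ^ j : ℕ) : ℤ) := by push_cast; rfl
  simp only [ancestor, cubeAt, Prod.mk.injEq, true_and]
  funext i
  rw [Int.fdiv_eq_ediv_of_nonneg _ (by positivity), h2, ← Int.floor_div_natCast,
    zpow_add₀ two_ne_zero, div_mul_eq_div_div]
  push_cast; rfl

lemma subset_ancestor (j : ℕ) (Q : Cube n) : cubeSet Q ⊆ cubeSet (ancestor j Q) := by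
  intro x hx
  rw [mem_cubeSet_iff_eq_cubeAt.1 hx, ancestor_cubeAt]
  exact mem_cubeSet_cubeAt _ x

lemma vol_ancestor (j : ℕ) (Q : Cube n) : vol (ancestor j Q) = ((2:ℝ) ^ n) ^ j * vol Q := by
  simp only [vol, ancestor, zpow_add₀ (two_ne_zero (α := ℝ)), zpow_natCast]
  ring

lemma cubeSet_cubeAt_mono {g g' : ℤ} (h : g ≤ g') (x : Fin n → ℝ) :
    cubeSet (cubeAt g x) ⊆ cubeSet (cubeAt g' x) := by
  have hg' : g' = g + ((g' - g).toNat : ℕ) := by omega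
  rw [hg', ← ancestor_cubeAt]
  exact subset_ancestor _ _

lemma summable_vol_ancestor_rpow (hn : n ≠ 0) {s : ℝ} (hs : s < 0) (Q : Cube n) :
    Summable fun j : ℕ => vol (ancestor j Q) ^ s := by
  have hr : ((2:ℝ) ^ n) ^ s < 1 := Real.rpow_lt_one_of_one_lt_of_neg (one_lt_pow₀ one_lt_two hn) hs
  refine ((summable_geometric_of_lt_one (by positivity) hr).mul_right (vol Q ^ s)).congr fun j => ?_
  rw [vol_ancestor, Real.mul_rpow (by positivity) (vol_pos Q).le, ← Real.rpow_natCast _ j,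
    ← Real.rpow_natCast _ j, ← Real.rpow_mul (by positivity), ← Real.rpow_mul (by positivity),
    mul_comm s]

lemma tsum_mul_indicator_cubeSet (F : Cube n → ℝ) (x : Fin n → ℝ) :
    ∑' Q, F Q * (cubeSet Q).indicator (fun _ => 1) x = ∑' g : ℤ, F (cubeAt g x) := by
  have hinj : Function.Injective fun g : ℤ => cubeAt g x := fun _ _ h => congrArg Prod.fst h
  rw [← hinj.tsum_eq]
  · simp [indicator_of_mem (mem_cubeSet_cubeAt _ x)]
  · intro Q hQ
    have hx : x ∈ cubeSet Q := by
      by_contra h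
      simp [h] at hQ
    exact ⟨Q.1, (mem_cubeSet_iff_eq_cubeAt.1 hx).symm⟩

/-- The other child, in direction `i`, of the parent of `Q`. -/
def sibling (i : Fin n) (Q : Cube n) : Cube n :=
  (Q.1, Function.update Q.2 i (Q.2 i + 1 - 2 * (Q.2 i % 2)))

lemma vol_sibling (i : Fin n) (Q : Cube n) : vol (sibling i Q) = vol Q := rfl

lemma ancestor_one_sibling (i : Fin n) (Q : Cube n) : ancestor 1 (sibling i Q) = ancestor 1 Q := by
  simp only [ancestor, sibling, Prod.mk.injEq, true_and, pow_one]
  funext l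
  rw [Int.fdiv_eq_ediv_of_nonneg _ zero_le_two, Int.fdiv_eq_ediv_of_nonneg _ zero_le_two]
  rcases eq_or_ne l i with rfl | hl
  · rw [Function.update_self]; omega
  · rw [Function.update_of_ne hl]

lemma disjoint_cubeSet_sibling (i : Fin n) (Q : Cube n) :
    Disjoint (cubeSet Q) (cubeSet (sibling i Q)) := by
  refine Set.disjoint_left.2 fun x hQ hS => ?_
  have h := congrArg (fun Q' : Cube n => Q'.2 i)
    ((mem_cubeSet_iff_eq_cubeAt.1 hQ).trans (mem_cubeSet_iff_eq_cubeAt.1 hS).symm)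
  simp only [sibling, Function.update_self] at h
  omega

lemma IalphaBil_indicator_of_mem_sibling (α : ℝ) {i : Fin n} {J : Cube n} (h : (Fin n → ℝ) → ℝ)
    {x : Fin n → ℝ} (hx : x ∈ cubeSet (sibling i J)) :
    IalphaBil α ((cubeSet J).indicator h) ((cubeSet (sibling i J)).indicator fun _ => 1) x
      = ∑' j : ℕ, (∫ y in cubeSet J, h y) * vol J * vol (ancestor (j + 1) J) ^ (α / n - 2) := by
  have hS : sibling i J = cubeAt J.1 x := mem_cubeSet_iff_eq_cubeAt.1 hx
  have hJ : cubeSet J ⊆ cubeSet (cubeAt (J.1 + 1) x) := by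
    have := ancestor_cubeAt 1 J.1 x
    rw [Nat.cast_one, ← hS, ancestor_one_sibling] at this
    exact this ▸ subset_ancestor 1 J
  have hinj : Function.Injective fun j : ℕ => J.1 + 1 + j := fun _ _ h => by simpa using h
  simp only [IalphaBil]
  rw [tsum_mul_indicator_cubeSet, ← hinj.tsum_eq]
  · refine tsum_congr fun j => ?_
    set Q := cubeAt (J.1 + 1 + j) x
    have hJQ : cubeSet J ⊆ cubeSet Q := hJ.trans (cubeSet_cubeAt_mono (by omega) x)
    have hSQ : cubeSet (sibling i J) ⊆ cubeSet Q := hS ▸ cubeSet_cubeAt_mono (by omega) x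
    have hvol : vol Q = vol (ancestor (j + 1) J) := by
      simp only [vol, Q, cubeAt, ancestor]; push_cast; ring_nf
    simp only [avg, setIntegral_indicator_of_subset (measurableSet_cubeSet _) hJQ,
      setIntegral_indicator_of_subset (measurableSet_cubeSet _) hSQ, setIntegral_const,
      measureReal_cubeSet, vol_sibling, smul_eq_mul, mul_one, ← hvol]
    have hQ := vol_pos Q
    rw [Real.rpow_sub hQ, Real.rpow_two]
    field_simp
  · intro g hg
    by_cases hgJ : J.1 < g
    · exact ⟨(g - J.1 - 1).toNat, by simp only; omega⟩
    refine absurd ?_ hg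
    have hdisj : cubeSet (cubeAt g x) ∩ cubeSet J = ∅ := by
      refine Set.disjoint_iff_inter_eq_empty.1 (Set.disjoint_of_subset_left ?_
        (disjoint_cubeSet_sibling i J).symm)
      exact hS ▸ cubeSet_cubeAt_mono (by omega) x
    simp [avg, setIntegral_indicator (measurableSet_cubeSet J), hdisj]

/-- `[b, I_α^D]₁(f₁, f₂)`. -/
noncomputable def bilCommutator (α : ℝ) (b f₁ f₂ : (Fin n → ℝ) → ℝ) (x : Fin n → ℝ) : ℝ :=
  b x * IalphaBil α f₁ f₂ x - IalphaBil α (fun y => b y * f₁ y) f₂ x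

lemma le_abs_bilCommutator_of_mem_sibling (hn : n ≠ 0) {α : ℝ} (hα : α < 2 * n)
    {b g : (Fin n → ℝ) → ℝ} {i : Fin n} {J : Cube n} {x : Fin n → ℝ}
    (hx : x ∈ cubeSet (sibling i J))
    (hg : ∫ y in cubeSet J, g y = 0) (hbg : 0 ≤ ∫ y in cubeSet J, b y * g y) :
    (∫ y in cubeSet J, b y * g y) * vol J * vol (ancestor 1 J) ^ (α / n - 2)
      ≤ |bilCommutator α b ((cubeSet J).indicator g)
          ((cubeSet (sibling i J)).indicator fun _ => 1) x| := by
  have hbf : (fun y => b y * (cubeSet J).indicator g y)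
      = (cubeSet J).indicator fun y => b y * g y :=
    funext fun y => (indicator_mul_right _ b g).symm
  have hγ : α / n - 2 < 0 := by
    rw [sub_neg, div_lt_iff₀ (by positivity)]; linarith
  have hsum := (summable_nat_add_iff 1).2 (summable_vol_ancestor_rpow hn hγ J)
  rw [bilCommutator, hbf, IalphaBil_indicator_of_mem_sibling α _ hx,
    IalphaBil_indicator_of_mem_sibling α _ hx, hg]
  simp only [zero_mul, tsum_zero, mul_zero, zero_sub, abs_neg]
  exact ((hsum.mul_left _).le_tsum 0 fun j _ =>
    mul_nonneg (mul_nonneg hbg (vol_pos J).le) (Real.rpow_nonneg (vol_pos _).le _)).trans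
    (le_abs_self _)

lemma setIntegral_abs_sub_avg_le {α p₁ p₂ q : ℝ} (hn : n ≠ 0) (hp₁ : 0 < p₁) (hp₂ : 0 < p₂)
    (hα : 0 ≤ α) (hα2 : α < 2 * n) (hq : 1 / q = 1 / p₁ + 1 / p₂ - α / n) (hq0 : 0 < q)
    {b : (Fin n → ℝ) → ℝ} {N : ℝ} (hb : LocallyIntegrable b volume) (hN : 0 ≤ N)
    (hcomm : ∀ f₁ f₂ : (Fin n → ℝ) → ℝ, Measurable f₁ → Measurable f₂ →
      (∫⁻ x, ENNReal.ofReal (|bilCommutator α b f₁ f₂ x| ^ q)) ^ (1 / q)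
        ≤ ENNReal.ofReal N * (∫⁻ x, ENNReal.ofReal (|f₁ x| ^ p₁)) ^ (1 / p₁)
            * (∫⁻ x, ENNReal.ofReal (|f₂ x| ^ p₂)) ^ (1 / p₂))
    (J : Cube n) :
    ∫ x in cubeSet J, |b x - avg b J| ≤ 2 * 4 ^ n * N * vol J := by
  set t := vol J
  have ht : 0 < t := vol_pos J
  set S := sibling ⟨0, Nat.pos_of_ne_zero hn⟩ J
  obtain ⟨g, hg, hg2, hg0, hbg⟩ :=
    exists_bounded_mean_zero_setIntegral_mul_eq (μ := volume) (c := avg b J)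
      (volume_cubeSet J ▸ ENNReal.ofReal_ne_top) (integrableOn_cubeSet hb J)
      (by rw [measureReal_cubeSet, avg, div_mul_cancel₀ _ (vol_pos J).ne'])
  set B := ∫ x in cubeSet J, |b x - avg b J|
  have hB : 0 ≤ B := setIntegral_nonneg (measurableSet_cubeSet J) fun _ _ => abs_nonneg _
  have hlow := ofReal_rpow_mul_measure_le_lintegral (μ := volume) (measurableSet_cubeSet S)
    (mul_nonneg (mul_nonneg (hbg ▸ hB) ht.le) (Real.rpow_nonneg (vol_pos _).le _)) hq0.le
    fun x hx => le_abs_bilCommutator_of_mem_sibling (b := b) hn hα2 hx hg0 (hbg ▸ hB)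
  have hf₁ :=
    lintegral_ofReal_rpow_abs_indicator_le (μ := volume) (measurableSet_cubeSet J) hp₁ hg2
  have hf₂ := lintegral_ofReal_rpow_abs_indicator_le (μ := volume) (measurableSet_cubeSet S) hp₂
    (f := fun _ => (1 : ℝ)) fun _ => abs_one.le
  rw [hbg, vol_ancestor, pow_one] at hlow
  have hbound : (ENNReal.ofReal ((B * t * (2 ^ n * t) ^ (α / n - 2)) ^ q) * volume (cubeSet S))
      ^ (1 / q) ≤ ENNReal.ofReal N * (ENNReal.ofReal (2 ^ p₁) * volume (cubeSet J)) ^ (1 / p₁)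
        * (ENNReal.ofReal (1 ^ p₂) * volume (cubeSet S)) ^ (1 / p₂) :=
    calc _ ≤ _ := ENNReal.rpow_le_rpow hlow (by positivity)
      _ ≤ _ := hcomm _ _ (hg.indicator (measurableSet_cubeSet J))
          (measurable_const.indicator (measurableSet_cubeSet S))
      _ ≤ _ := by gcongr
  simp only [volume_cubeSet] at hbound
  rw [← ENNReal.ofReal_mul (by positivity), ← ENNReal.ofReal_mul (by positivity),
    ← ENNReal.ofReal_mul (by positivity), ENNReal.ofReal_rpow_of_nonneg (by positivity)
    (by positivity), ENNReal.ofReal_rpow_of_nonneg (by positivity) (by positivity),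
    ENNReal.ofReal_rpow_of_nonneg (by positivity) (by positivity), ← ENNReal.ofReal_mul hN,
    ← ENNReal.ofReal_mul (by positivity), ENNReal.ofReal_le_ofReal_iff (by positivity)] at hbound
  have h4 : (4 : ℝ) ^ n = ((2 : ℝ) ^ n) ^ 2 := by rw [← pow_mul, mul_comm, pow_mul]; norm_num
  rw [h4]
  exact le_of_rpow_scaling_bound hB ht (one_le_pow₀ one_le_two) (by positivity) hp₁ hq0 hq hbound

end Cube

/-- if the bilinear commutator `[b, I_α^D]₁` is bounded from
`L^{p₁} × L^{p₂}` to `L^q` with norm `N`, then `‖b‖_{BMO_D} ≤ C N`. -/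
theorem statement16 {n : ℕ} (α p₁ p₂ q : ℝ) (hp₁ : 1 < p₁) (hp₂ : 1 < p₂)
    (hα : 0 < α) (hα2 : α < 2*n) (hq : 1/q = 1/p₁ + 1/p₂ - α/n) (hq0 : 0 < 1/q) :
    ∃ C : ℝ, 0 < C ∧ ∀ (b : (Fin n → ℝ) → ℝ) (N : ℝ),
      LocallyIntegrable b volume → 0 ≤ N →
      (∀ f₁ f₂ : (Fin n → ℝ) → ℝ, Measurable f₁ → Measurable f₂ →
        (∫⁻ x, ENNReal.ofReal (|b x * IalphaBil α f₁ f₂ x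
            - IalphaBil α (fun y => b y * f₁ y) f₂ x| ^ q)) ^ (1/q)
          ≤ ENNReal.ofReal N * (∫⁻ x, ENNReal.ofReal (|f₁ x| ^ p₁)) ^ (1/p₁)
              * (∫⁻ x, ENNReal.ofReal (|f₂ x| ^ p₂)) ^ (1/p₂)) →
      (⨆ J : Cube n, (∫⁻ x in cubeSet J, ENNReal.ofReal |b x - avg b J|)
          / ENNReal.ofReal (vol J)) ≤ ENNReal.ofReal (C * N) := by
  have hn : n ≠ 0 := by
    rintro rfl
    simp only [CharP.cast_eq_zero, mul_zero] at hα2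
    linarith
  refine ⟨2 * 4 ^ n, by positivity, fun b N hb hN hcomm => iSup_le fun J => ?_⟩
  have hosc : IntegrableOn (fun x => |b x - avg b J|) (cubeSet J) :=
    ((Cube.integrableOn_cubeSet hb J).sub (integrable_const _)).abs
  rw [← ofReal_integral_eq_lintegral_ofReal hosc (.of_forall fun _ => abs_nonneg _)]
  refine ENNReal.div_le_of_le_mul ?_
  rw [← ENNReal.ofReal_mul (by positivity)]
  exact ENNReal.ofReal_le_ofReal (Cube.setIntegral_abs_sub_avg_le hn (by linarith) (by linarith)
    hα.le hα2 hq (one_div_pos.1 hq0) hb hN hcomm J)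
end
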